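/- Let V : S → ℝ be monotone, s^r ∈ S, z^r ∈ ℝ, and set V' = Π_M(s^r, z^r, V). Suppose s ∈ S satisfies s ≠ s^r and V(s) < V'(s) (the value at s was increased by the projection). Then there exists a lower immediate neighbor s' ∈ S_L(s) with V'(s') = V'(s). -/

import Mathlib

open scoped Classical

/-- The monotonicity-preserving projection `Π_M(s^r, z^r, V)`: the value at the reference
point `s^r` is set to `z^r`, values at states above `s^r` are raised to at least `z^r`,
values at states below `s^r` are lowered to at most `z^r`, and all other values are kept. -/
noncomputable def projMono {S : Type} [PartialOrder S] (sr : S) (zr : ℝ) (V : S → ℝ) :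
    S → ℝ :=
  fun s =>
    if s = sr then zr
    else if sr ≤ s then max zr (V s)
    else if s ≤ sr then min zr (V s)
    else V s

/-- The set of lower immediate neighbors of `s`: states strictly below `s` with no other
state strictly in between. -/
def lowerNbrs {S : Type} [PartialOrder S] (s : S) : Set S :=
  {s' | s' ≤ s ∧ s' ≠ s ∧ ¬∃ s'' : S, s'' ≠ s ∧ s'' ≠ s' ∧ s' ≤ s'' ∧ s'' ≤ s}

/-
A value can only be raised above `s^r`, and there only to `z^r`. So `s` lies above `s^r`
with `V(s) < z^r`, and its new value is `z^r`. Since `S` is finite, the interval `[s^r, s)`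
contains an element `s'` covered by `s`; by monotonicity `V(s') ≤ V(s) < z^r`, so `s'` is
raised to `z^r` as well.
-/

section

variable {S : Type} [PartialOrder S]

theorem mem_lowerNbrs_iff_covBy {s s' : S} : s' ∈ lowerNbrs s ↔ s' ⋖ s := by
  constructor
  · rintro ⟨hle, hne, hbetween⟩
    refine ⟨hle.lt_of_ne hne, fun c hs'c hcs => hbetween ⟨c, hcs.ne, hs'c.ne', hs'c.le, hcs.le⟩⟩
  · intro hcov
    refine ⟨hcov.le, hcov.ne, fun ⟨c, hcs, hcs', hs'c, hc⟩ => ?_⟩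
    exact hcov.2 (hs'c.lt_of_ne hcs'.symm) (hc.lt_of_ne hcs)

theorem projMono_le_of_not_le {sr s : S} {zr : ℝ} {V : S → ℝ} (h : ¬sr ≤ s) :
    projMono sr zr V s ≤ V s := by
  have hs : s ≠ sr := by rintro rfl; exact h le_rfl
  simp only [projMono, if_neg hs, if_neg h]
  split_ifs
  exacts [min_le_right _ _, le_rfl]

theorem projMono_eq_of_le {sr s : S} {zr : ℝ} {V : S → ℝ} (hs : sr ≤ s) (hV : V s ≤ zr) :
    projMono sr zr V s = zr := by
  unfold projMono
  split_ifs
  exacts [rfl, max_eq_left hV]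

theorem le_and_lt_of_lt_projMono {sr s : S} {zr : ℝ} {V : S → ℝ} (hs : s ≠ sr)
    (h : V s < projMono sr zr V s) : sr ≤ s ∧ V s < zr := by
  have hle : sr ≤ s := by
    by_contra hle
    exact (projMono_le_of_not_le hle).not_gt h
  refine ⟨hle, ?_⟩
  simpa only [projMono, if_neg hs, if_pos hle, lt_max_iff, lt_irrefl, or_false] using h

end

theorem exists_lowerNbr_eq_of_increased {S : Type} [Fintype S] [PartialOrder S]
    (V : S → ℝ) (hV : Monotone V) (sr : S) (zr : ℝ) (s : S) (hs : s ≠ sr)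
    (hinc : V s < projMono sr zr V s) :
    ∃ s' ∈ lowerNbrs s, projMono sr zr V s' = projMono sr zr V s := by
  obtain ⟨hsr, hVs⟩ := le_and_lt_of_lt_projMono hs hinc
  obtain ⟨s', hsrs', hs's⟩ := exists_le_covBy_of_lt (hsr.lt_of_ne hs.symm)
  refine ⟨s', mem_lowerNbrs_iff_covBy.mpr hs's, ?_⟩
  have hVs' : V s' ≤ zr := ((hV hs's.le).trans_lt hVs).le
  rw [projMono_eq_of_le hsrs' hVs', projMono_eq_of_le hsr hVs.le]
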